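/- Let (L, R) be an adjoint pair with R : ℬ → 𝒜 exact, L : 𝒜 → ℬ reflecting zero objects, and let M, N be R-adstatic objects of 𝒜. If L(N) is dual L(M)-CS-Rickart in ℬ, then N is dual M-CS-Rickart in 𝒜. -/

import Mathlib

open CategoryTheory CategoryTheory.Limits

universe v u v₂ u₂

/-- A monomorphism `f` is essential if every `h` with `f ≫ h` mono is mono. -/
def EssentialMono {C : Type u} [Category.{v} C] {M N : C} (f : M ⟶ N) : Prop :=
  Mono f ∧ ∀ ⦃P : C⦄ (h : N ⟶ P), Mono (f ≫ h) → Mono h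

/-- An epimorphism `f` is superfluous if every `h` with `h ≫ f` epi is epi. -/
def SuperfluousEpi {C : Type u} [Category.{v} C] {M N : C} (f : M ⟶ N) : Prop :=
  Epi f ∧ ∀ ⦃P : C⦄ (h : P ⟶ M), Epi (h ≫ f) → Epi h

/-- `CSRickart M N` : `N` is `M`-CS-Rickart. -/
def CSRickart {C : Type u} [Category.{v} C] [Abelian C] (M N : C) : Prop :=
  ∀ f : M ⟶ N, ∃ (L : C) (e : kernel f ⟶ L) (s : L ⟶ M),
    EssentialMono e ∧ (∃ retr : M ⟶ L, s ≫ retr = 𝟙 L) ∧ e ≫ s = kernel.ι f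

/-- `DualCSRickart M N` : `N` is dual `M`-CS-Rickart. -/
def DualCSRickart {C : Type u} [Category.{v} C] [Abelian C] (M N : C) : Prop :=
  ∀ f : M ⟶ N, ∃ (P : C) (r : N ⟶ P) (t : P ⟶ cokernel f),
    (∃ sec : P ⟶ N, sec ≫ r = 𝟙 P) ∧ SuperfluousEpi t ∧ r ≫ t = cokernel.π f

/-! Factor `cokernel.π (L f)` as a retraction `L N → P` followed by a superfluous epimorphism
`t : P → coker (L f)` and apply `R`. Since `R` preserves cokernels and `η_M`, `η_N` are
isomorphisms, `R (coker (L f)) ≅ coker f` and `N ≅ R (L N)`, so this gives a retraction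
`N → R P` followed by `R t`. To see that `R t` is superfluous, apply `L` and compare with `t`
through the counit, which is invertible at `L N` and hence at its retract `P`; this is enough
because `L` reflects epimorphisms, as it preserves cokernels and reflects zero objects. -/

lemma SuperfluousEpi.comp_isIso {C : Type u} [Category.{v} C] {P X Y : C} {t : P ⟶ X}
    (ht : SuperfluousEpi t) (e : X ⟶ Y) [IsIso e] : SuperfluousEpi (t ≫ e) :=
  ⟨have := ht.1; inferInstance, fun _ h hh ↦
    ht.2 h ((epi_comp_iff_of_isIso _ e).1 (by rwa [Category.assoc]))⟩

section

variable {C : Type u} [Category.{v} C]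

def HasRetractSuperfluousFactorization {X Y : C} (p : X ⟶ Y) : Prop :=
  ∃ (P : C) (h : Retract P X) (t : P ⟶ Y), SuperfluousEpi t ∧ h.r ≫ t = p

namespace HasRetractSuperfluousFactorization

variable {X Y : C} {p : X ⟶ Y}

lemma isIso_comp (hp : HasRetractSuperfluousFactorization p) {X' : C} (e : X' ⟶ X) [IsIso e] :
    HasRetractSuperfluousFactorization (e ≫ p) := by
  obtain ⟨P, h, t, ht, rfl⟩ := hp
  exact ⟨P, h.trans (asIso e).symm.retract, t, ht, by simp⟩

lemma comp_isIso (hp : HasRetractSuperfluousFactorization p) {Y' : C} (e : Y ⟶ Y') [IsIso e] :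
    HasRetractSuperfluousFactorization (p ≫ e) := by
  obtain ⟨P, h, t, ht, rfl⟩ := hp
  exact ⟨P, h, t ≫ e, ht.comp_isIso e, by simp⟩

end HasRetractSuperfluousFactorization

end

lemma dualCSRickart_iff {C : Type u} [Category.{v} C] [Abelian C] (M N : C) :
    DualCSRickart M N ↔ ∀ f : M ⟶ N, HasRetractSuperfluousFactorization (cokernel.π f) := by
  refine forall_congr' fun f ↦ ⟨?_, ?_⟩
  · rintro ⟨P, r, t, ⟨sec, hsec⟩, ht, hrt⟩
    exact ⟨P, ⟨sec, r, hsec⟩, t, ht, hrt⟩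
  · rintro ⟨P, h, t, ht, hrt⟩
    exact ⟨P, h.r, t, ⟨h.i, h.retract⟩, ht, hrt⟩

lemma CategoryTheory.Functor.reflectsEpimorphisms_of_reflects_isZero
    {C : Type u} [Category.{v} C] [Abelian C] {D : Type u₂} [Category.{v₂} D] [Abelian D]
    (F : C ⥤ D) [F.PreservesZeroMorphisms] [PreservesColimitsOfShape WalkingParallelPair F]
    (hF : ∀ X : C, IsZero (F.obj X) → IsZero X) : F.ReflectsEpimorphisms where
  reflects g _ := Preadditive.epi_of_isZero_cokernel g <| hF _ <|
    (isZero_cokernel_of_epi (F.map g)).of_iso (PreservesCokernel.iso F g)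

namespace CategoryTheory.Adjunction

variable {A : Type u} [Category.{v} A] {B : Type u₂} [Category.{v₂} B]
  {L : A ⥤ B} {R : B ⥤ A} (adj : L ⊣ R)

lemma isIso_counit_app_obj_of_isIso_unit_app (X : A) [IsIso (adj.unit.app X)] :
    IsIso (adj.counit.app (L.obj X)) :=
  IsIso.eq_inv_of_hom_inv_id (adj.left_triangle_components X) ▸ inferInstance

lemma superfluousEpi_map [L.ReflectsEpimorphisms] [R.PreservesEpimorphisms] {P C : B}
    {t : P ⟶ C} (ht : SuperfluousEpi t) [IsIso (adj.counit.app P)] :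
    SuperfluousEpi (R.map t) := by
  have := adj.isLeftAdjoint
  have := ht.1
  refine ⟨inferInstance, fun Q g hg ↦ L.epi_of_epi_map ?_⟩
  have hε : L.map (R.map t) ≫ adj.counit.app C = adj.counit.app P ≫ t := adj.counit_naturality t
  have : Epi (adj.counit.app C) := epi_of_epi_fac hε
  have : Epi ((L.map g ≫ adj.counit.app P) ≫ t) := by
    rw [Category.assoc, ← hε, ← Category.assoc, ← L.map_comp]
    infer_instance
  exact (epi_comp_iff_of_isIso _ (adj.counit.app P)).1 (ht.2 _ this)

lemma _root_.HasRetractSuperfluousFactorization.map_rightAdjoint [L.ReflectsEpimorphisms]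
    [R.PreservesEpimorphisms] {X Y : B} {p : X ⟶ Y} (hp : HasRetractSuperfluousFactorization p)
    [IsIso (adj.counit.app X)] : HasRetractSuperfluousFactorization (R.map p) := by
  obtain ⟨P, h, t, ht, rfl⟩ := hp
  have : IsIso (adj.counit.app P) :=
    MorphismProperty.of_retract (P := .isomorphisms B) (NatTrans.retractArrowApp adj.counit h)
      (inferInstanceAs (IsIso (adj.counit.app X)))
  exact ⟨R.obj P, h.map R, R.map t, adj.superfluousEpi_map ht, (R.map_comp _ _).symm⟩

lemma hasRetractSuperfluousFactorization_cokernel_π [Abelian A] [Abelian B]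
    [R.PreservesZeroMorphisms] {M N : A} (f : M ⟶ N) [IsIso (adj.unit.app M)]
    [IsIso (adj.unit.app N)] [PreservesColimit (parallelPair (L.map f) 0) R]
    (hf : HasRetractSuperfluousFactorization (R.map (cokernel.π (L.map f)))) :
    HasRetractSuperfluousFactorization (cokernel.π f) := by
  let e : cokernel f ≅ cokernel (R.map (L.map f)) :=
    cokernel.mapIso _ _ (asIso (adj.unit.app M)) (asIso (adj.unit.app N)) (by simp)
  have hπ : (adj.unit.app N ≫ R.map (cokernel.π (L.map f))) ≫
      (PreservesCokernel.iso R (L.map f)).hom ≫ e.inv = cokernel.π f := by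
    rw [Category.assoc, PreservesCokernel.π_iso_hom_assoc, ← Category.assoc, Iso.comp_inv_eq]
    simp [e, cokernel.mapIso]
  rw [← hπ]
  exact (hf.isIso_comp _).comp_isIso _

end CategoryTheory.Adjunction

theorem dualCSRickart_of_L_dualCSRickart_adstatic_general
    {A : Type u} [Category.{v} A] [Abelian A] {B : Type u₂} [Category.{v₂} B] [Abelian B]
    (L : A ⥤ B) (R : B ⥤ A) (adj : L ⊣ R)
    [PreservesFiniteColimits R]
    (hrefl : ∀ X : A, IsZero (L.obj X) → IsZero X)
    (M N : A) (hM : IsIso (adj.unit.app M)) (hN : IsIso (adj.unit.app N))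
    (h : DualCSRickart (L.obj M) (L.obj N)) : DualCSRickart M N := by
  have := adj.isLeftAdjoint
  have := L.reflectsEpimorphisms_of_reflects_isZero hrefl
  have := adj.isIso_counit_app_obj_of_isIso_unit_app N
  rw [dualCSRickart_iff] at h ⊢
  exact fun f ↦
    adj.hasRetractSuperfluousFactorization_cokernel_π f ((h (L.map f)).map_rightAdjoint adj)

theorem dualCSRickart_of_L_dualCSRickart_adstatic
    {A : Type u} [Category.{v} A] [Abelian A] {B : Type u₂} [Category.{v₂} B] [Abelian B]
    (L : A ⥤ B) (R : B ⥤ A) (adj : L ⊣ R)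
    [PreservesFiniteLimits R] [PreservesFiniteColimits R]
    (hrefl : ∀ X : A, IsZero (L.obj X) → IsZero X)
    (M N : A) (hM : IsIso (adj.unit.app M)) (hN : IsIso (adj.unit.app N))
    (h : DualCSRickart (L.obj M) (L.obj N)) : DualCSRickart M N :=
  dualCSRickart_of_L_dualCSRickart_adstatic_general L R adj hrefl M N hM hN h
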